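/- arXiv:2310.05659 — 2 statements merged into one kernel-verified Lean document; each statement's English description precedes it below -/
import Mathlib

section
/- Let L_x φ(z) = −(z−x)φ'(z) + (1/2)φ''(z) for φ ∈ C²(ℝ) and define the Donsker–Varadhan functional I(x,θ) = − inf_{φ ∈ C²(ℝ), φ > 0} ∫_ℝ (L_x φ(z))/φ(z) dθ(z) for probability measures θ on ℝ with finite second moment. Then I(x,θ) ≥ −(1/2)(1 + x²) + (1/2)∫_ℝ (x − z)² dθ(z). -/
open MeasureTheory

/-- Lower bound for the Donsker–Varadhan functional of the Ornstein–Uhlenbeck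
generator centered at `x`:
`I(x,θ) = - inf_{φ ∈ C², φ > 0} ∫ (L_x φ)/φ dθ ≥ -(1/2)(1+x²) + (1/2)∫ (x-z)² dθ`. -/
theorem stmt_4 (x : ℝ) (θ : Measure ℝ) [IsProbabilityMeasure θ]
    (h2 : Integrable (fun z => z ^ 2) θ) :
    ((-(1 / 2) * (1 + x ^ 2) + (1 / 2) * ∫ z, (x - z) ^ 2 ∂θ : ℝ) : EReal)
      ≤ - sInf {r : EReal | ∃ φ : ℝ → ℝ, ContDiff ℝ 2 φ ∧ (∀ z, 0 < φ z) ∧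
          r = ((∫ z, (-(z - x) * deriv φ z + (1 / 2) * deriv (deriv φ) z) / φ z ∂θ
              : ℝ) : EReal)} := by
  set φ : ℝ → ℝ := fun z => Real.exp (z ^ 2 / 2) with hφ
  have hpos : ∀ z, 0 < φ z := fun z => Real.exp_pos _
  have hd1 : ∀ z, HasDerivAt φ (Real.exp (z ^ 2 / 2) * z) z := by
    intro z
    have h : HasDerivAt (fun z : ℝ => z ^ 2 / 2) z z := by
      simpa using (hasDerivAt_pow 2 z).div_const 2
    simpa using h.exp
  have hderiv1 : deriv φ = fun z => Real.exp (z ^ 2 / 2) * z :=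
    funext fun z => (hd1 z).deriv
  have hd2 : ∀ z, HasDerivAt (deriv φ)
      (Real.exp (z ^ 2 / 2) * z * z + Real.exp (z ^ 2 / 2) * 1) z := by
    intro z
    rw [hderiv1]
    exact (hd1 z).mul (hasDerivAt_id z)
  have hderiv2 : deriv (deriv φ)
      = fun z => Real.exp (z ^ 2 / 2) * z * z + Real.exp (z ^ 2 / 2) * 1 :=
    funext fun z => (hd2 z).deriv
  have hcd : ContDiff ℝ 2 φ :=
    Real.contDiff_exp.comp (((contDiff_id (𝕜 := ℝ)).pow 2).div_const 2)
  have hint : ∀ z, (-(z - x) * deriv φ z + (1 / 2) * deriv (deriv φ) z) / φ z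
      = -(1 / 2) * z ^ 2 + x * z + 1 / 2 := by
    intro z
    rw [hderiv2, hderiv1]
    have he : Real.exp (z ^ 2 / 2) ≠ 0 := Real.exp_ne_zero _
    simp only [hφ]
    field_simp
    ring
  have h1 : Integrable (fun z : ℝ => z) θ := by
    refine ((integrable_const (1 : ℝ)).add h2).mono'
      measurable_id.aestronglyMeasurable ?_
    filter_upwards with z
    simp only [Real.norm_eq_abs, Pi.add_apply]
    nlinarith [sq_nonneg (|z| - 1), abs_nonneg z, sq_abs z]
  have hI : (∫ z, (-(z - x) * deriv φ z + (1 / 2) * deriv (deriv φ) z) / φ z ∂θ)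
      = -(1 / 2) * (∫ z, z ^ 2 ∂θ) + x * (∫ z, z ∂θ) + 1 / 2 := by
    rw [show (fun z => (-(z - x) * deriv φ z + (1 / 2) * deriv (deriv φ) z) / φ z)
        = fun z => -(1 / 2) * z ^ 2 + x * z + 1 / 2 from funext hint]
    have hA : Integrable (fun z : ℝ => -(1 / 2) * z ^ 2 + x * z) θ := by
      exact (h2.const_mul _).add (h1.const_mul _)
    rw [integral_add hA (integrable_const _),
      integral_add (h2.const_mul _) (h1.const_mul _),
      integral_const_mul, integral_const_mul, integral_const]
    simp
  have hJ : (∫ z, (x - z) ^ 2 ∂θ)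
      = x ^ 2 + (-(2 * x)) * (∫ z, z ∂θ) + ∫ z, z ^ 2 ∂θ := by
    have h : (fun z : ℝ => (x - z) ^ 2)
        = fun z => (x ^ 2 + (-(2 * x)) * z) + z ^ 2 := by
      funext z; ring
    have hB : Integrable (fun z : ℝ => x ^ 2 + -(2 * x) * z) θ := by
      exact (integrable_const _).add (h1.const_mul _)
    rw [h, integral_add hB h2,
      integral_add (integrable_const _) (h1.const_mul _),
      integral_const_mul, integral_const]
    simp
  have hmem : ((∫ z, (-(z - x) * deriv φ z + (1 / 2) * deriv (deriv φ) z) / φ z ∂θ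
      : ℝ) : EReal) ∈ {r : EReal | ∃ φ : ℝ → ℝ, ContDiff ℝ 2 φ ∧ (∀ z, 0 < φ z) ∧
      r = ((∫ z, (-(z - x) * deriv φ z + (1 / 2) * deriv (deriv φ) z) / φ z ∂θ
          : ℝ) : EReal)} := ⟨φ, hcd, hpos, rfl⟩
  have hle := sInf_le hmem
  have hkey : ((-(1 / 2) * (1 + x ^ 2) + (1 / 2) * ∫ z, (x - z) ^ 2 ∂θ : ℝ) : EReal)
      = -((∫ z, (-(z - x) * deriv φ z + (1 / 2) * deriv (deriv φ) z) / φ z ∂θ : ℝ) : EReal) := by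
    rw [← EReal.coe_neg, EReal.coe_eq_coe_iff, hI, hJ]
    ring
  rw [hkey]
  exact EReal.neg_le_neg_iff.mpr hle
end

section
/- Let A_N f(x,y) = N Σ_{γ∈Γ} r(x,y,γ)(f(x + γ_x/N, y + γ_y) − f(x,y)) on E = [0,∞)^l × F with F finite and Γ finite, r continuous. For f ∈ C¹_b([0,∞)^l) and h ∈ C([0,∞)^l × F), set f_N(x,y) = f(x) + N^{−1} h(x,y) and H_N g = (1/N) e^{−Ng} A_N e^{Ng}. Then for every (x,y), lim_{N→∞} H_N f_N(x,y) = Σ_{γ∈Γ} r(x,y,γ) ( e^{⟨∇f(x), γ_x⟩ + h(x, y+γ_y) − h(x,y)} − 1 ). -/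
/-!
Each summand converges separately. Along the direction `γ_x`, `N (f(x + γ_x/N) - f(x))` is a
difference quotient with step `1/N`, so it tends to the directional derivative `⟨∇f(x), γ_x⟩`;
`h(x + γ_x/N, y')` tends to `h(x, y')` by continuity of `h(·, y')`; the limit passes through `exp`.
-/

open Filter Topology
open scoped RealInnerProductSpace

theorem tendsto_add_natCast_inv_smul {E : Type*} [NormedAddCommGroup E] [NormedSpace ℝ E]
    (x v : E) : Tendsto (fun N : ℕ => x + (N : ℝ)⁻¹ • v) atTop (𝓝 x) := by
  have hinv : Tendsto (fun N : ℕ => (N : ℝ)⁻¹) atTop (𝓝 0) :=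
    tendsto_inv_atTop_zero.comp tendsto_natCast_atTop_atTop
  simpa using (hinv.smul_const v).const_add x

theorem DifferentiableAt.tendsto_natCast_mul_sub_inner_gradient {E : Type*}
    [NormedAddCommGroup E] [InnerProductSpace ℝ E] [CompleteSpace E] {f : E → ℝ} {x : E}
    (hf : DifferentiableAt ℝ f x) (v : E) :
    Tendsto (fun N : ℕ => (N : ℝ) * (f (x + (N : ℝ)⁻¹ • v) - f x)) atTop
      (𝓝 ⟪gradient f x, v⟫) := by
  rw [inner_gradient_left]
  refine hf.hasFDerivAt.lim v ?_
  simpa using tendsto_natCast_atTop_atTop (R := ℝ)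

theorem stmt_19_general {l : ℕ} {ι F : Type*} [Fintype ι]
    (γx : ι → EuclideanSpace ℝ (Fin l)) (σ : ι → F → F)
    (r : EuclideanSpace ℝ (Fin l) → F → ι → ℝ)
    (f : EuclideanSpace ℝ (Fin l) → ℝ) (hf : ContDiff ℝ 1 f)
    (h : EuclideanSpace ℝ (Fin l) → F → ℝ)
    (hh : ∀ y, Continuous (fun x => h x y))
    (x : EuclideanSpace ℝ (Fin l)) (y : F) :
    Tendsto
      (fun N : ℕ => ∑ γ, r x y γ *
        (Real.exp ((N : ℝ) * (f (x + ((N : ℝ)⁻¹) • γx γ) - f x)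
            + h (x + ((N : ℝ)⁻¹) • γx γ) (σ γ y) - h x y) - 1))
      atTop
      (𝓝 (∑ γ, r x y γ *
        (Real.exp ((inner ℝ (gradient f x) (γx γ) : ℝ) + h x (σ γ y) - h x y) - 1))) := by
  refine tendsto_finsetSum _ fun γ _ => (Tendsto.sub_const ?_ 1).const_mul (r x y γ)
  have hdiff : Tendsto (fun N : ℕ => (N : ℝ) * (f (x + (N : ℝ)⁻¹ • γx γ) - f x)) atTop
      (𝓝 ⟪gradient f x, γx γ⟫) :=
    (hf.differentiable one_ne_zero x).tendsto_natCast_mul_sub_inner_gradient (γx γ)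
  have hcorr : Tendsto (fun N : ℕ => h (x + (N : ℝ)⁻¹ • γx γ) (σ γ y)) atTop
      (𝓝 (h x (σ γ y))) :=
    (hh (σ γ y)).continuousAt.tendsto.comp (tendsto_add_natCast_inv_smul x (γx γ))
  exact (Real.continuous_exp.tendsto _).comp ((hdiff.add hcorr).sub_const (h x y))

/-- Convergence of the nonlinear generators `H_N f_N` for a two-scale chemical
reaction network: with `f_N(x,y) = f(x) + h(x,y)/N`,
`H_N f_N(x,y) = Σ_γ r(x,y,γ)(e^{N(f(x+γ_x/N)-f(x)) + h(x+γ_x/N, y+γ_y) - h(x,y)} - 1)`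
converges, as `N → ∞`, to `Σ_γ r(x,y,γ)(e^{⟨∇f(x),γ_x⟩ + h(x,y+γ_y) - h(x,y)} - 1)`. -/
theorem stmt_19 {l : ℕ} {ι F : Type*} [Fintype ι] [Finite F]
    (γx : ι → EuclideanSpace ℝ (Fin l)) (σ : ι → F → F)
    (r : EuclideanSpace ℝ (Fin l) → F → ι → ℝ)
    (hr : ∀ y γ, Continuous (fun x => r x y γ))
    (f : EuclideanSpace ℝ (Fin l) → ℝ) (hf : ContDiff ℝ 1 f)
    (hfb : ∃ C : ℝ, ∀ x, ‖fderiv ℝ f x‖ ≤ C)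
    (h : EuclideanSpace ℝ (Fin l) → F → ℝ)
    (hh : ∀ y, Continuous (fun x => h x y))
    (x : EuclideanSpace ℝ (Fin l)) (y : F) :
    Tendsto
      (fun N : ℕ => ∑ γ, r x y γ *
        (Real.exp ((N : ℝ) * (f (x + ((N : ℝ)⁻¹) • γx γ) - f x)
            + h (x + ((N : ℝ)⁻¹) • γx γ) (σ γ y) - h x y) - 1))
      atTop
      (𝓝 (∑ γ, r x y γ *
        (Real.exp ((inner ℝ (gradient f x) (γx γ) : ℝ) + h x (σ γ y) - h x y) - 1))) :=
  stmt_19_general γx σ r f hf h hh x y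
end
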